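/- Let A be a nonempty finite set, f: Δ(A) → ℝ^A continuous, and x* ∈ Δ(A) such that x*(a') = 0 whenever f_{a''}(x*) > f_{a'}(x*) for some a''. Let (x_ℓ) be any sequence of totally mixed points of Δ(A) converging to x*, and suppose the set A⁺ = {a : max_{ã} f_{ã}(x*) − f_a(x*) > 0} is nonempty. Set γ0 = (1/2)·min_{a∈A⁺}(max_{ã} f_{ã}(x*) − f_a(x*)) and ε_ℓ = max_{a : x*(a)=0} x_ℓ(a). Then γ0 > 0, ε_ℓ → 0, and there exists L such that for all ℓ ≥ L and all a', a'' ∈ A: f_{a''}(x_ℓ) − f_{a'}(x_ℓ) > γ0 implies x_ℓ(a') ≤ ε_ℓ. -/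

import Mathlib

/-!
Near `x*` every payoff `f_a(x_ℓ)` is within `γ₀/2` of `f_a(x*)`, so a payoff gap larger than `γ₀`
at `x_ℓ` leaves a strictly positive gap at `x*`. By the support condition the worse action is then
unused at `x*`, and its weight at `x_ℓ` is one of the terms whose maximum is `ε_ℓ`; any positive
threshold would do in place of `γ₀`. Each of those terms tends to `x*(a) = 0`, whence `ε_ℓ → 0`.
-/

open Filter Topology Finset

theorem Finset.lt_inf'_filter_lt {ι α : Type*} [LinearOrder α] (s : Finset ι) (g : ι → α) (c : α)
    (h : (s.filter fun a => c < g a).Nonempty) : c < (s.filter fun a => c < g a).inf' h g :=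
  (Finset.lt_inf'_iff h).2 fun _ ha => (Finset.mem_filter.1 ha).2

section OffSupport

variable {α ι : Type*} [Fintype ι] [Nonempty ι] {l : Filter α} {x : α → ι → ℝ} {y : ι → ℝ}

theorem tendsto_sup'_off_support (hx : Tendsto x l (𝓝 y)) :
    Tendsto (fun t => univ.sup' univ_nonempty fun a => if y a = 0 then x t a else 0) l (𝓝 0) := by
  have hterm : ∀ a ∈ univ, Tendsto (fun t => if y a = 0 then x t a else 0) l (𝓝 0) := by
    intro a _
    split_ifs with ha
    · exact ha ▸ (continuous_apply a).continuousAt.tendsto.comp hx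
    · exact tendsto_const_nhds
  simpa only [sup'_const] using Tendsto.finset_sup'_nhds_apply univ_nonempty hterm

theorem le_sup'_off_support {t : α} {a : ι} (ha : y a = 0) :
    x t a ≤ univ.sup' univ_nonempty fun b => if y b = 0 then x t b else 0 := by
  simpa only [ha, if_true] using le_sup' (fun b => if y b = 0 then x t b else 0) (mem_univ a)

end OffSupport

theorem lt_of_gap_of_abs_sub_lt {ι : Type*} {u v : ι → ℝ} {γ : ℝ}
    (huv : ∀ a, |u a - v a| < γ / 2) {a' a'' : ι} (hgap : γ < u a'' - u a') : v a' < v a'' := by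
  have h' := abs_lt.1 (huv a')
  have h'' := abs_lt.1 (huv a'')
  linarith [h'.1, h''.2]

theorem eventually_forall_abs_sub_lt_of_continuousWithinAt {α ι : Type*} [Fintype ι]
    {l : Filter α} {S : Set (ι → ℝ)} {f : (ι → ℝ) → ι → ℝ} {y : ι → ℝ} {x : α → ι → ℝ}
    (hf : ContinuousWithinAt f S y) (hxS : ∀ᶠ t in l, x t ∈ S) (hx : Tendsto x l (𝓝 y))
    {δ : ℝ} (hδ : 0 < δ) : ∀ᶠ t in l, ∀ a, |f (x t) a - f y a| < δ := by
  have hfx : Tendsto (fun t => f (x t)) l (𝓝 (f y)) :=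
    hf.tendsto.comp (tendsto_nhdsWithin_iff.2 ⟨hx, hxS⟩)
  filter_upwards [Metric.tendsto_nhds.1 hfx δ hδ] with t ht a
  exact (Real.dist_eq _ _ ▸ dist_le_pi_dist (f (x t)) (f y) a).trans_lt ht

theorem eventually_le_sup'_off_support_of_gap {α ι : Type*} [Fintype ι] [Nonempty ι]
    {l : Filter α} {S : Set (ι → ℝ)} {f : (ι → ℝ) → ι → ℝ} {y : ι → ℝ} {x : α → ι → ℝ}
    (hf : ContinuousWithinAt f S y) (hxS : ∀ᶠ t in l, x t ∈ S) (hx : Tendsto x l (𝓝 y))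
    (hsupp : ∀ a' a'', f y a' < f y a'' → y a' = 0) {γ : ℝ} (hγ : 0 < γ) :
    ∀ᶠ t in l, ∀ a' a'', γ < f (x t) a'' - f (x t) a' →
      x t a' ≤ univ.sup' univ_nonempty fun a => if y a = 0 then x t a else 0 := by
  filter_upwards [eventually_forall_abs_sub_lt_of_continuousWithinAt hf hxS hx (half_pos hγ)]
    with t hclose a' a'' hgap
  exact le_sup'_off_support (hsupp a' a'' (lt_of_gap_of_abs_sub_lt hclose hgap))

/-- Every support-in-argmax point is the limit of ε-perfect γ0-points along any
    totally mixed approximating sequence. -/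
theorem stmt12 {A : Type*} [Fintype A] [Nonempty A]
    (f : (A → ℝ) → A → ℝ)
    (hf : ContinuousOn f {x : A → ℝ | (∀ a, 0 ≤ x a) ∧ ∑ a, x a = 1})
    (xs : A → ℝ) (hxs : (∀ a, 0 ≤ xs a) ∧ ∑ a, xs a = 1)
    (hsupp : ∀ a' a'', f xs a' < f xs a'' → xs a' = 0)
    (x : ℕ → A → ℝ)
    (hxmem : ∀ ℓ, (∀ a, 0 < x ℓ a) ∧ ∑ a, x ℓ a = 1)
    (hconv : Filter.Tendsto x Filter.atTop (nhds xs))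
    (hAplus : (Finset.univ.filter fun a =>
        0 < Finset.univ.sup' Finset.univ_nonempty (f xs) - f xs a).Nonempty) :
    0 < (1 / 2) * ((Finset.univ.filter fun a =>
        0 < Finset.univ.sup' Finset.univ_nonempty (f xs) - f xs a).inf' hAplus
        fun a => Finset.univ.sup' Finset.univ_nonempty (f xs) - f xs a) ∧
    Filter.Tendsto (fun ℓ => Finset.univ.sup' Finset.univ_nonempty fun a =>
        if xs a = 0 then x ℓ a else 0) Filter.atTop (nhds 0) ∧
    ∃ L : ℕ, ∀ ℓ ≥ L, ∀ a' a'',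
      (1 / 2) * ((Finset.univ.filter fun a =>
          0 < Finset.univ.sup' Finset.univ_nonempty (f xs) - f xs a).inf' hAplus
          fun a => Finset.univ.sup' Finset.univ_nonempty (f xs) - f xs a)
        < f (x ℓ) a'' - f (x ℓ) a' →
      x ℓ a' ≤ Finset.univ.sup' Finset.univ_nonempty fun a =>
        if xs a = 0 then x ℓ a else 0 := by
  have hγ₀ := mul_pos one_half_pos (Finset.lt_inf'_filter_lt _ _ 0 hAplus)
  have hxS : ∀ᶠ ℓ in atTop, x ℓ ∈ {x : A → ℝ | (∀ a, 0 ≤ x a) ∧ ∑ a, x a = 1} :=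
    Eventually.of_forall fun ℓ => ⟨fun a => ((hxmem ℓ).1 a).le, (hxmem ℓ).2⟩
  exact ⟨hγ₀, tendsto_sup'_off_support hconv, eventually_atTop.1 <|
    eventually_le_sup'_off_support_of_gap (hf xs hxs) hxS hconv hsupp hγ₀⟩
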